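/- For each n ≥ 3, there is exactly one λ-quiddity (a_1,...,a_{n+2}) of size n+2 (tuple of positive integers with M_{n+2}(a_1,...,a_{n+2}) = ±Id) whose last component a_{n+2} equals n, namely (1,2,2,...,2,1,n) (i.e. a_1 = a_{n+1} = 1, a_i = 2 for 2 ≤ i ≤ n, a_{n+2} = n). -/
import Mathlib


open Matrix

def E (a : ℤ) : Matrix (Fin 2) (Fin 2) ℤ := !![a, -1; 1, 0]

/-- `M [a₁, …, aₙ] = E aₙ * ⋯ * E a₁`. -/
def M (l : List ℤ) : Matrix (Fin 2) (Fin 2) ℤ :=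
  (l.map E).foldl (fun acc x => x * acc) 1

def S : Matrix (Fin 2) (Fin 2) ℤ := !![0, -1; 1, 0]

def T : Matrix (Fin 2) (Fin 2) ℤ := !![1, 1; 0, 1]

set_option linter.unnecessarySeqFocus false
set_option linter.unreachableTactic false
set_option linter.unusedTactic false
set_option maxHeartbeats 1000000

lemma M_nil : M [] = 1 := rfl

lemma M_aux (l : List ℤ) : ∀ b, (l.map E).foldl (fun acc x => x * acc) b = M l * b := by
  induction l with
  | nil => intro b; simp [M]
  | cons a l ih =>
    intro b
    have h1 : M (a :: l) = M l * (E a * 1) := by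
      show (List.map E (a :: l)).foldl (fun acc x => x * acc) 1 = _
      rw [List.map_cons, List.foldl_cons]
      exact ih (E a * 1)
    rw [List.map_cons, List.foldl_cons, ih (E a * b), h1, mul_one, mul_assoc]

lemma M_cons (a : ℤ) (l : List ℤ) : M (a :: l) = M l * E a := by
  show (List.map E (a :: l)).foldl _ 1 = _
  rw [List.map_cons, List.foldl_cons, M_aux]
  simp

lemma M_append (u v : List ℤ) : M (u ++ v) = M v * M u := by
  induction u with
  | nil => simp [M_nil]
  | cons a u ih => simp [M_cons, ih, mul_assoc]

lemma M_single (a : ℤ) : M [a] = E a := by simp [M_cons, M_nil]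

lemma M_cons2 (x y : ℤ) (v : List ℤ) : M (x::y::v) = M v * (E y * E x) := by
  simp [M_cons, mul_assoc]

lemma M_cons3 (x y z : ℤ) (v : List ℤ) : M (x::y::z::v) = M v * (E z * E y * E x) := by
  simp [M_cons, mul_assoc]

lemma L1 (a b : ℤ) : E b * E 1 * E a = E (b-1) * E (a-1) := by
  ext i j
  fin_cases i <;> fin_cases j <;>
    simp [E, Matrix.mul_apply, Fin.sum_univ_two] <;> ring

lemma L2 (a b : ℤ) : E b * E 0 * E a = -(E (a+b)) := by
  ext i j
  fin_cases i <;> fin_cases j <;>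
    simp [E, Matrix.mul_apply, Fin.sum_univ_two] <;> ring

lemma move1 (u v : List ℤ) (a b : ℤ) :
    M (u ++ a::1::b::v) = M (u ++ (a-1)::(b-1)::v) := by
  rw [M_append, M_append, M_cons3, M_cons2, L1]

lemma moveZ (u v : List ℤ) (a b : ℤ) :
    M (u ++ a::0::b::v) = -M (u ++ (a+b)::v) := by
  rw [M_append, M_append, M_cons3, M_cons, L2]
  simp [mul_assoc]

def Qd (l : List ℤ) : Prop := M l = 1 ∨ M l = -1

lemma Qd_of_neg {l l' : List ℤ} (h : M l = -M l') (h' : Qd l') : Qd l := by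
  rcases h' with h'|h'
  · right; rw [h, h']
  · left; rw [h, h']; simp

def Einv (a : ℤ) : Matrix (Fin 2) (Fin 2) ℤ := !![0, 1; -1, a]

lemma E_mul_Einv (a : ℤ) : E a * Einv a = 1 := by
  ext i j
  fin_cases i <;> fin_cases j <;>
    simp [E, Einv, Matrix.mul_apply, Fin.sum_univ_two, Matrix.one_apply]

lemma Einv_mul_E (a : ℤ) : Einv a * E a = 1 := by
  ext i j
  fin_cases i <;> fin_cases j <;>
    simp [E, Einv, Matrix.mul_apply, Fin.sum_univ_two, Matrix.one_apply]

lemma Q_rot1 (a : ℤ) (s : List ℤ) : Qd (a :: s) ↔ Qd (s ++ [a]) := by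
  have h1 : M (a :: s) = M s * E a := M_cons a s
  have h2 : M (s ++ [a]) = E a * M s := by rw [M_append, M_single]
  have key : ∀ η : Matrix (Fin 2) (Fin 2) ℤ, M s * E a = η → E a * M s = E a * η * Einv a := by
    intro η h
    calc E a * M s = E a * (M s * E a) * Einv a := by
          rw [mul_assoc, mul_assoc, E_mul_Einv, mul_one]
      _ = E a * η * Einv a := by rw [h]
  have key2 : ∀ η : Matrix (Fin 2) (Fin 2) ℤ, E a * M s = η → M s * E a = Einv a * η * E a := by
    intro η h
    calc M s * E a = Einv a * (E a * M s) * E a := by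
          rw [← mul_assoc (Einv a) (E a) (M s), Einv_mul_E, one_mul]
      _ = Einv a * η * E a := by rw [h]
  constructor
  · rintro (h|h)
    · left; rw [h2, key 1 (h1 ▸ h), mul_one, E_mul_Einv]
    · right; rw [h2, key (-1) (h1 ▸ h), mul_neg, mul_one, neg_mul, E_mul_Einv]
  · rintro (h|h)
    · left; rw [h1, key2 1 (h2 ▸ h), mul_one, Einv_mul_E]
    · right; rw [h1, key2 (-1) (h2 ▸ h), mul_neg, mul_one, neg_mul, Einv_mul_E]

lemma Q_rot (u v : List ℤ) : Qd (u ++ v) ↔ Qd (v ++ u) := by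
  induction u generalizing v with
  | nil => simp
  | cons a u ih =>
    have h1 : Qd ((a :: u) ++ v) ↔ Qd ((u ++ v) ++ [a]) := by
      rw [List.cons_append, Q_rot1, List.append_assoc]
    rw [h1, List.append_assoc, ih (v ++ [a]), List.append_assoc]
    simp

def Dm : Matrix (Fin 2) (Fin 2) ℤ := !![1, 0; 0, -1]

lemma Dm_mul_Dm : Dm * Dm = 1 := by
  ext i j
  fin_cases i <;> fin_cases j <;>
    simp [Dm, Matrix.mul_apply, Fin.sum_univ_two, Matrix.one_apply]

lemma E_transpose (a : ℤ) : (E a)ᵀ = Dm * E a * Dm := by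
  ext i j
  fin_cases i <;> fin_cases j <;>
    simp [Dm, E, Matrix.mul_apply, Fin.sum_univ_two, Matrix.transpose_apply]

lemma M_reverse (l : List ℤ) : M l.reverse = Dm * (M l)ᵀ * Dm := by
  induction l with
  | nil => simp [M_nil, Dm_mul_Dm]
  | cons a l ih =>
    rw [List.reverse_cons, M_append, M_single, ih, M_cons, Matrix.transpose_mul, E_transpose]
    simp only [← mul_assoc]
    rw [Dm_mul_Dm, one_mul]

lemma Qd_reverse {l : List ℤ} (h : Qd l) : Qd l.reverse := by
  rcases h with h|h
  · left; rw [M_reverse, h]; simp [Dm_mul_Dm]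
  · right; rw [M_reverse, h]; simp [Dm_mul_Dm]

lemma growth (l : List ℤ) (h : ∀ x ∈ l, (2:ℤ) ≤ x) :
    0 ≤ M l 1 0 ∧ M l 1 0 < M l 0 0 := by
  induction l using List.reverseRecOn with
  | nil => simp [M_nil, Matrix.one_apply]
  | append_singleton s a ih =>
    have hs : ∀ x ∈ s, (2:ℤ) ≤ x := fun x hx => h x (by simp [hx])
    have ha : (2:ℤ) ≤ a := h a (by simp)
    obtain ⟨h1, h2⟩ := ih hs
    have hM : M (s ++ [a]) = E a * M s := by rw [M_append, M_single]
    have e10 : M (s ++ [a]) 1 0 = M s 0 0 := by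
      rw [hM]; simp [E, Matrix.mul_apply, Fin.sum_univ_two]
    have e00 : M (s ++ [a]) 0 0 = a * M s 0 0 - M s 1 0 := by
      rw [hM]; simp [E, Matrix.mul_apply, Fin.sum_univ_two]; ring
    rw [e10, e00]
    constructor
    · omega
    · nlinarith

lemma notQ_allge2 (l : List ℤ) (hne : l ≠ []) (h : ∀ x ∈ l, (2:ℤ) ≤ x) : ¬ Qd l := by
  intro hQ
  obtain ⟨s, a, rfl⟩ := (List.eq_nil_or_concat l).resolve_left hne
  simp only [List.concat_eq_append] at hQ h
  have hs : ∀ x ∈ s, (2:ℤ) ≤ x := fun x hx => h x (by simp [hx])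
  obtain ⟨h1, h2⟩ := growth s hs
  have hM : M (s ++ [a]) = E a * M s := by rw [M_append, M_single]
  have e10 : M (s ++ [a]) 1 0 = M s 0 0 := by
    rw [hM]; simp [E, Matrix.mul_apply, Fin.sum_univ_two]
  have : M (s ++ [a]) 1 0 = 0 := by
    rcases hQ with hq|hq <;> rw [hq] <;> simp [Matrix.one_apply]
  omega

lemma exists_one (l : List ℤ) (hne : l ≠ []) (hpos : ∀ x ∈ l, (1:ℤ) ≤ x) (hQ : Qd l) :
    ∃ u v, l = u ++ (1:ℤ) :: v := by
  by_contra hcon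
  push_neg at hcon
  refine notQ_allge2 l hne (fun x hx => ?_) hQ
  rcases eq_or_lt_of_le (hpos x hx) with h|h
  · exfalso
    obtain ⟨u, v, huv⟩ := List.append_of_mem hx
    exact hcon u v (by rw [huv, ← h])
  · omega

lemma notQ1 (a : ℤ) : ¬ Qd [a] := by
  intro hQ
  have : M [a] 1 0 = 0 := by
    rcases hQ with hq|hq <;> rw [hq] <;> simp [Matrix.one_apply]
  rw [M_single] at this
  simp [E] at this

lemma notQ2 (a b : ℤ) (ha : 1 ≤ a) : ¬ Qd [a, b] := by
  intro hQ
  have : M [a, b] 1 0 = 0 := by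
    rcases hQ with hq|hq <;> rw [hq] <;> simp [Matrix.one_apply]
  rw [M_cons2, M_nil, one_mul] at this
  simp [E, Matrix.mul_apply, Fin.sum_univ_two] at this
  omega

lemma entry_pair (a b : ℤ) : (E b * E a) 0 0 = a * b - 1 := by
  simp [E, Matrix.mul_apply, Fin.sum_univ_two]; ring

lemma entry_triple (a b c : ℤ) : (E c * E b * E a) 0 0 = a * b * c - a - c := by
  simp [E, Matrix.mul_apply, Fin.sum_univ_two]; ring

lemma Qd_entry10 {l : List ℤ} (hQ : Qd l) : M l 1 0 = 0 := by
  rcases hQ with hq|hq <;> rw [hq] <;> simp [Matrix.one_apply]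

lemma C3aux {a b c : ℤ} (hQ : Qd [a, b, c]) : a * b = 1 := by
  have h := Qd_entry10 hQ
  rw [M_cons3, M_nil, one_mul] at h
  have : (E c * E b * E a) 1 0 = a * b - 1 := by
    simp [E, Matrix.mul_apply, Fin.sum_univ_two]; ring
  rw [this] at h
  omega

lemma C3 {a b c : ℤ} (ha : 1 ≤ a) (hb : 1 ≤ b) (hc : 1 ≤ c) (hQ : Qd [a, b, c]) :
    a = 1 ∧ b = 1 ∧ c = 1 := by
  have h1 := C3aux hQ
  have hrot : Qd [b, c, a] := by
    have := (Q_rot1 a [b, c]).mp hQ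
    simpa using this
  have h2 := C3aux hrot
  constructor
  · nlinarith
  constructor
  · nlinarith
  · nlinarith

lemma entry10_Emul (d : ℤ) (X : Matrix (Fin 2) (Fin 2) ℤ) : (E d * X) 1 0 = X 0 0 := by
  simp [E, Matrix.mul_apply, Fin.sum_univ_two]

lemma C4aux {a b c d : ℤ} (hQ : Qd [a, b, c, d]) : a * b * c - a - c = 0 := by
  have h := Qd_entry10 hQ
  have hM : M [a,b,c,d] = E d * (E c * E b * E a) := by
    rw [M_cons3, M_single]
  rw [hM, entry10_Emul, entry_triple] at h
  exact h

lemma tri {a b c : ℤ} (ha : 1 ≤ a) (hb : 1 ≤ b) (hc : 1 ≤ c) (h : a * b * c - a - c = 0) :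
    (a = 1 ∧ b = 2 ∧ c = 1) ∨ (a = 2 ∧ b = 1 ∧ c = 2) := by
  rcases eq_or_lt_of_le hb with hb1|hb2
  · right
    have hprod : (a - 1) * (c - 1) = 1 := by nlinarith
    rcases Int.eq_one_or_neg_one_of_mul_eq_one' hprod with ⟨h1, h2⟩|⟨h1, h2⟩ <;> omega
  · left
    have h2 : 2 ≤ b := hb2
    have hkey : a * c = 1 := by
      nlinarith [mul_nonneg (by omega : (0:ℤ) ≤ b - 2) (by positivity : (0:ℤ) ≤ a * c),
        mul_nonneg (by omega : (0:ℤ) ≤ a - 1) (by omega : (0:ℤ) ≤ c - 1)]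
    rcases Int.eq_one_or_neg_one_of_mul_eq_one' hkey with ⟨h3, h4⟩|⟨h3, h4⟩
    · subst h3; subst h4
      refine ⟨rfl, by linarith, rfl⟩
    · omega

lemma C4 {a b c d : ℤ} (ha : 1 ≤ a) (hb : 1 ≤ b) (hc : 1 ≤ c) (hd : 1 ≤ d)
    (hQ : Qd [a, b, c, d]) :
    (a = 1 ∧ b = 2 ∧ c = 1 ∧ d = 2) ∨ (a = 2 ∧ b = 1 ∧ c = 2 ∧ d = 1) := by
  have h1 := tri ha hb hc (C4aux hQ)
  have hrot : Qd [b, c, d, a] := by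
    have := (Q_rot1 a [b, c, d]).mp hQ
    simpa using this
  have h2 := tri hb hc hd (C4aux hrot)
  rcases h1 with ⟨r1, r2, r3⟩|⟨r1, r2, r3⟩ <;> rcases h2 with ⟨s1, s2, s3⟩|⟨s1, s2, s3⟩ <;>
    simp_all <;> omega

lemma BL : ∀ (fuel : ℕ) (l : List ℤ), l.length ≤ fuel → (∀ x ∈ l, (1:ℤ) ≤ x) → Qd l →
    ∀ c ∈ l, c ≤ (l.length : ℤ) - 2 := by
  intro fuel
  induction fuel with
  | zero =>
    intro l hlen hpos hQ c hc
    have : l = [] := List.eq_nil_of_length_eq_zero (by omega)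
    subst this; simp at hc
  | succ fuel IH =>
    intro l hlen hpos hQ c hc
    by_contra hcon
    push_neg at hcon
    -- small length cases
    rcases hsz : l.length with _|_|_|_|m0
    · have : l = [] := List.eq_nil_of_length_eq_zero hsz
      subst this; simp at hc
    · obtain ⟨x, rfl⟩ := List.length_eq_one_iff.mp hsz
      exact notQ1 x hQ
    · obtain ⟨x, y, rfl⟩ := List.length_eq_two.mp hsz
      exact notQ2 x y (hpos x (by simp)) hQ
    · obtain ⟨x, y, z, rfl⟩ := List.length_eq_three.mp hsz
      obtain ⟨r1, r2, r3⟩ := C3 (hpos x (by simp)) (hpos y (by simp)) (hpos z (by simp)) hQ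
      rw [hsz] at hcon
      simp at hc
      rcases hc with rfl|rfl|rfl <;> omega
    · -- length ≥ 4
      have hm4 : 4 ≤ l.length := by omega
      have hne : l ≠ [] := by intro h; rw [h] at hm4; simp at hm4
      have hc3 : 3 ≤ c := by
        have : (4:ℤ) ≤ (l.length : ℤ) := by exact_mod_cast hm4
        omega
      obtain ⟨u, v, hl⟩ := exists_one l hne hpos hQ
      have hvu_len : 3 ≤ (v ++ u).length := by
        rw [hl] at hm4
        simp [List.length_append] at hm4 ⊢
        omega
      obtain ⟨b, w1, hw1⟩ : ∃ b w1, v ++ u = b :: w1 := by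
        cases h : v ++ u with
        | nil => rw [h] at hvu_len; simp at hvu_len
        | cons x xs => exact ⟨x, xs, rfl⟩
      obtain ⟨mid, a, hw2⟩ : ∃ mid a, w1 = mid ++ [a] := by
        rcases List.eq_nil_or_concat w1 with h|⟨mid, a, h⟩
        · rw [hw1, h] at hvu_len; simp at hvu_len
        · exact ⟨mid, a, by rw [h]; simp⟩
      have hmid_len : mid.length + 3 = l.length := by
        have : (v ++ u).length = mid.length + 2 := by rw [hw1, hw2]; simp
        rw [hl]
        simp [List.length_append] at this ⊢
        omega
      have hLl : (l.length : ℤ) = (mid.length : ℤ) + 3 := by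
        rw [← hmid_len]; push_cast; ring
      have hrot : Qd (a :: 1 :: b :: mid) := by
        have h1 : Qd ((1:ℤ) :: (v ++ u)) := by
          have h2 := (Q_rot u ((1:ℤ)::v)).mp (by rw [← hl]; exact hQ)
          simpa using h2
        rw [hw1, hw2] at h1
        rw [Q_rot1]
        simpa using h1
      have hmemvu : ∀ x : ℤ, x ∈ v ++ u ↔ (x = b ∨ x ∈ mid ∨ x = a) := by
        intro x
        rw [hw1, hw2]
        simp only [List.mem_cons, List.mem_append, List.mem_singleton]
        tauto
      have hposR : ∀ x ∈ (a :: 1 :: b :: mid), (1:ℤ) ≤ x := by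
        intro x hx
        simp only [List.mem_cons] at hx
        rcases hx with rfl|rfl|rfl|hx
        · exact hpos x (by rw [hl]; have := (hmemvu x).mpr (by tauto); simp at this ⊢; tauto)
        · omega
        · exact hpos x (by rw [hl]; have := (hmemvu x).mpr (by tauto); simp at this ⊢; tauto)
        · exact hpos x (by rw [hl]; have := (hmemvu x).mpr (by tauto); simp at this ⊢; tauto)
      have hcR : c = b ∨ c ∈ mid ∨ c = a := by
        apply (hmemvu c).mp
        rw [hl] at hc
        simp at hc ⊢
        rcases hc with h|h|h
        · tauto
        · omega
        · tauto
      have ha1 : 1 ≤ a := hposR a (by simp)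
      have hb1 : 1 ≤ b := hposR b (by simp)
      have hQ2 : Qd ((a-1) :: (b-1) :: mid) := by
        have h := move1 [] mid a b
        simp only [List.nil_append] at h
        unfold Qd at hrot ⊢
        rw [← h]
        exact hrot
      have hmidpos : ∀ x ∈ mid, (1:ℤ) ≤ x := fun x hx => hposR x (by simp [hx])
      have hmid1 : 1 ≤ mid.length := by omega
      rcases eq_or_lt_of_le ha1 with ha2|ha2 <;> rcases eq_or_lt_of_le hb1 with hb2|hb2
      · -- a = 1, b = 1
        obtain ⟨mid', z, hz⟩ : ∃ mid' z, mid = mid' ++ [z] := by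
          rcases List.eq_nil_or_concat mid with h|⟨mid', z, h⟩
          · rw [h] at hmid1; simp at hmid1
          · exact ⟨mid', z, by rw [h]; simp⟩
        have hlz : mid.length = mid'.length + 1 := by rw [hz]; simp
        have hQ3 : Qd (z :: 0 :: 0 :: mid') := by
          rw [Q_rot1]
          have : ((0:ℤ) :: 0 :: mid') ++ [z] = 0 :: 0 :: mid := by rw [hz]; simp
          rw [this]
          have e1 : a - 1 = 0 := by omega
          have e2 : b - 1 = 0 := by omega
          rw [e1, e2] at hQ2
          exact hQ2
        have hQ4 : Qd (z :: mid') := by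
          apply Qd_of_neg (l' := z :: 0 :: 0 :: mid') _ hQ3
          have h := moveZ [] mid' z 0
          simp only [List.nil_append, add_zero] at h
          rw [h, neg_neg]
        have hlen4 : (z :: mid').length ≤ fuel := by simp; omega
        have hpos4 : ∀ x ∈ z :: mid', (1:ℤ) ≤ x := by
          intro x hx
          apply hmidpos
          rw [hz]
          simp at hx ⊢
          tauto
        rcases hcR with rfl|hcmid|rfl
        · omega
        · have hcz : c = z ∨ c ∈ mid' := by
            rw [hz] at hcmid; simp at hcmid; tauto
          have hwit : c ∈ z :: mid' := by simp; tauto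
          have := IH (z :: mid') hlen4 hpos4 hQ4 c hwit
          simp at this
          push_cast at this
          omega
        · omega
      · -- a = 1, b ≥ 2
        obtain ⟨mid', z, hz⟩ : ∃ mid' z, mid = mid' ++ [z] := by
          rcases List.eq_nil_or_concat mid with h|⟨mid', z, h⟩
          · rw [h] at hmid1; simp at hmid1
          · exact ⟨mid', z, by rw [h]; simp⟩
        have hlz : mid.length = mid'.length + 1 := by rw [hz]; simp
        have hzpos : 1 ≤ z := hmidpos z (by rw [hz]; simp)
        have hQ3 : Qd (z :: 0 :: (b-1) :: mid') := by
          rw [Q_rot1]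
          have : ((0:ℤ) :: (b-1) :: mid') ++ [z] = 0 :: (b-1) :: mid := by rw [hz]; simp
          rw [this]
          have e1 : a - 1 = 0 := by omega
          rw [e1] at hQ2
          exact hQ2
        have hQ4 : Qd ((z + (b-1)) :: mid') := by
          apply Qd_of_neg (l' := z :: 0 :: (b-1) :: mid') _ hQ3
          have h := moveZ [] mid' z (b-1)
          simp only [List.nil_append] at h
          rw [h, neg_neg]
        have hlen4 : ((z + (b-1)) :: mid').length ≤ fuel := by simp; omega
        have hpos4 : ∀ x ∈ (z + (b-1)) :: mid', (1:ℤ) ≤ x := by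
          intro x hx
          simp at hx
          rcases hx with rfl|hx
          · omega
          · exact hmidpos x (by rw [hz]; simp [hx])
        rcases hcR with rfl|hcmid|rfl
        · -- c = b : witness z + (b-1)
          have := IH _ hlen4 hpos4 hQ4 (z + (c-1)) (by simp)
          simp at this
          push_cast at this
          omega
        · rcases (by rw [hz] at hcmid; simp at hcmid; tauto : c = z ∨ c ∈ mid') with rfl|hcm
          · have := IH _ hlen4 hpos4 hQ4 (c + (b-1)) (by simp)
            simp at this
            push_cast at this
            omega
          · have := IH _ hlen4 hpos4 hQ4 c (by simp [hcm])
            simp at this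
            push_cast at this
            omega
        · omega
      · -- a ≥ 2, b = 1
        obtain ⟨y, mid'', hy⟩ : ∃ y mid'', mid = y :: mid'' := by
          cases h : mid with
          | nil => rw [h] at hmid1; simp at hmid1
          | cons x xs => exact ⟨x, xs, rfl⟩
        have hly : mid.length = mid''.length + 1 := by rw [hy]; simp
        have hypos : 1 ≤ y := hmidpos y (by rw [hy]; simp)
        have hQ3 : Qd ((a-1) :: 0 :: y :: mid'') := by
          have e2 : b - 1 = 0 := by omega
          rw [e2, hy] at hQ2
          exact hQ2
        have hQ4 : Qd (((a-1) + y) :: mid'') := by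
          apply Qd_of_neg (l' := (a-1) :: 0 :: y :: mid'') _ hQ3
          have h := moveZ [] mid'' (a-1) y
          simp only [List.nil_append] at h
          rw [h, neg_neg]
        have hlen4 : (((a-1) + y) :: mid'').length ≤ fuel := by
          simp
          rw [hy] at hmid1 hmid_len
          simp at hmid_len
          omega
        have hpos4 : ∀ x ∈ ((a-1) + y) :: mid'', (1:ℤ) ≤ x := by
          intro x hx
          simp at hx
          rcases hx with rfl|hx
          · omega
          · exact hmidpos x (by rw [hy]; simp [hx])
        rcases hcR with rfl|hcmid|rfl
        · omega
        · rcases (by rw [hy] at hcmid; simp at hcmid; tauto : c = y ∨ c ∈ mid'') with rfl|hcm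
          · have := IH _ hlen4 hpos4 hQ4 ((a-1) + c) (by simp)
            simp at this
            push_cast at this
            rw [hy] at hmid_len
            simp at hmid_len
            omega
          · have := IH _ hlen4 hpos4 hQ4 c (by simp [hcm])
            simp at this
            push_cast at this
            rw [hy] at hmid_len
            simp at hmid_len
            omega
        · have := IH _ hlen4 hpos4 hQ4 ((c-1) + y) (by simp)
          simp at this
          push_cast at this
          rw [hy] at hmid_len
          simp at hmid_len
          omega
      · -- a ≥ 2, b ≥ 2
        have hpos2 : ∀ x ∈ (a-1) :: (b-1) :: mid, (1:ℤ) ≤ x := by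
          intro x hx
          simp at hx
          rcases hx with rfl|rfl|hx
          · omega
          · omega
          · exact hmidpos x hx
        have hlen2 : ((a-1) :: (b-1) :: mid).length ≤ fuel := by simp; omega
        rcases hcR with rfl|hcmid|rfl
        · have := IH _ hlen2 hpos2 hQ2 (c-1) (by simp)
          simp at this
          push_cast at this
          omega
        · have := IH _ hlen2 hpos2 hQ2 c (by simp [hcmid])
          simp at this
          push_cast at this
          omega
        · have := IH _ hlen2 hpos2 hQ2 (c-1) (by simp)
          simp at this
          push_cast at this
          omega

lemma BL' (l : List ℤ) (hpos : ∀ x ∈ l, (1:ℤ) ≤ x) (hQ : Qd l) :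
    ∀ c ∈ l, c ≤ (l.length : ℤ) - 2 :=
  BL l.length l le_rfl hpos hQ

lemma interior_contra (N a b : ℤ) (p q : List ℤ)
    (hpos : ∀ x ∈ N :: (p ++ a :: 1 :: b :: q), (1:ℤ) ≤ x)
    (hQ : Qd (N :: (p ++ a :: 1 :: b :: q)))
    (hN3 : 3 ≤ N)
    (hbig : (p.length : ℤ) + q.length + 2 ≤ N) : False := by
  have ha1 : 1 ≤ a := hpos a (by simp)
  have hb1 : 1 ≤ b := hpos b (by simp)
  have hqpos : ∀ x ∈ q, (1:ℤ) ≤ x := fun x hx => hpos x (by simp [hx])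
  have hppos : ∀ x ∈ p, (1:ℤ) ≤ x := fun x hx => hpos x (by simp [hx])
  have hQ2 : Qd ((N :: p) ++ (a-1) :: (b-1) :: q) := by
    have h := move1 (N :: p) q a b
    unfold Qd at hQ ⊢
    rw [← h]
    simpa using hQ
  rcases eq_or_lt_of_le ha1 with ha2|ha2
  · -- a = 1
    have e1 : a - 1 = 0 := by omega
    rcases List.eq_nil_or_concat p with hp|⟨p', z, hp⟩
    · -- p = [] : pattern N :: 0 :: (b-1) :: q
      subst hp
      have hQ3 : Qd (N :: 0 :: (b-1) :: q) := by
        simpa [e1] using hQ2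
      have hQ4 : Qd ((N + (b-1)) :: q) := by
        apply Qd_of_neg (l' := N :: 0 :: (b-1) :: q) _ hQ3
        have h := moveZ [] q N (b-1)
        simp only [List.nil_append] at h
        rw [h, neg_neg]
      have hb := BL' ((N + (b-1)) :: q)
        (by
          intro x hx
          simp at hx
          rcases hx with rfl|hx
          · omega
          · exact hqpos x hx)
        hQ4 (N + (b-1)) (by simp)
      simp at hb hbig
      push_cast at hb
      omega
    · subst hp
      have hQ3 : Qd ((N :: p') ++ z :: 0 :: (b-1) :: q) := by
        have : (N :: (p' ++ [z])) ++ (a-1) :: (b-1) :: q = (N :: p') ++ z :: 0 :: (b-1) :: q := by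
          simp [e1]
        rw [← this]
        simpa using hQ2
      have hQ4 : Qd ((N :: p') ++ (z + (b-1)) :: q) := by
        apply Qd_of_neg (l' := (N :: p') ++ z :: 0 :: (b-1) :: q) _ hQ3
        have h := moveZ (N :: p') q z (b-1)
        rw [h, neg_neg]
      have hzpos : 1 ≤ z := hppos z (by simp)
      have hb := BL' ((N :: p') ++ (z + (b-1)) :: q)
        (by
          intro x hx
          simp at hx
          rcases hx with rfl|hx|rfl|hx
          · omega
          · exact hppos x (by simp [hx])
          · omega
          · exact hqpos x hx)
        hQ4 N (by simp)
      simp [List.length_append] at hb hbig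
      push_cast at hb
      omega
  · rcases eq_or_lt_of_le hb1 with hb2|hb2
    · -- a ≥ 2, b = 1
      have e2 : b - 1 = 0 := by omega
      rcases q with _|⟨y, q'⟩
      · -- q = [] : rotate
        have hQ3 : Qd (p ++ (a-1) :: 0 :: N :: []) := by
          have h1 : Qd (N :: (p ++ [a-1, 0])) := by
            have : N :: p ++ [a - 1, b - 1] = N :: (p ++ [a-1, 0]) := by simp [e2]
            rw [← this]
            exact hQ2
          have h2 := (Q_rot1 N (p ++ [a-1, 0])).mp h1
          simpa using h2
        have hQ4 : Qd (p ++ [(a-1) + N]) := by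
          apply Qd_of_neg (l' := p ++ (a-1) :: 0 :: N :: []) _ hQ3
          have h := moveZ p [] (a-1) N
          rw [h, neg_neg]
        have hb := BL' (p ++ [(a-1) + N])
          (by
            intro x hx
            simp at hx
            rcases hx with hx|rfl
            · exact hppos x hx
            · omega)
          hQ4 ((a-1) + N) (by simp)
        simp [List.length_append] at hb hbig
        push_cast at hb
        omega
      · have hQ3 : Qd ((N :: p) ++ (a-1) :: 0 :: y :: q') := by
          simpa [e2] using hQ2
        have hQ4 : Qd ((N :: p) ++ ((a-1) + y) :: q') := by
          apply Qd_of_neg (l' := (N :: p) ++ (a-1) :: 0 :: y :: q') _ hQ3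
          have h := moveZ (N :: p) q' (a-1) y
          rw [h, neg_neg]
        have hypos : 1 ≤ y := hqpos y (by simp)
        have hb := BL' ((N :: p) ++ ((a-1) + y) :: q')
          (by
            intro x hx
            simp at hx
            rcases hx with rfl|hx|rfl|hx
            · omega
            · exact hppos x hx
            · omega
            · exact hqpos x (by simp [hx]))
          hQ4 N (by simp)
        simp [List.length_append] at hb hbig
        push_cast at hb
        omega
    · -- a ≥ 2, b ≥ 2
      have hb := BL' ((N :: p) ++ (a-1) :: (b-1) :: q)
        (by
          intro x hx
          simp at hx
          rcases hx with rfl|hx|rfl|rfl|hx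
          · omega
          · exact hppos x hx
          · omega
          · omega
          · exact hqpos x hx)
        hQ2 N (by simp)
      simp [List.length_append] at hb hbig
      push_cast at hb
      omega

lemma headcase (fuel : ℕ)
    (IH : ∀ s' : List ℤ, s'.length ≤ fuel → 3 ≤ s'.length → (∀ x ∈ s', (1:ℤ) ≤ x) →
      Qd (((s'.length : ℤ) - 1) :: s') → s' = 1 :: (List.replicate (s'.length - 2) (2:ℤ) ++ [1]))
    (b : ℤ) (s₂ : List ℤ) (hb : 1 ≤ b) (hpos : ∀ x ∈ s₂, (1:ℤ) ≤ x)
    (hlen : s₂.length + 1 ≤ fuel) (h2 : 2 ≤ s₂.length)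
    (hQ : Qd (((s₂.length : ℤ) + 1) :: 1 :: b :: s₂)) :
    b :: s₂ = List.replicate s₂.length (2:ℤ) ++ [1] := by
  set N : ℤ := (s₂.length : ℤ) + 1 with hN
  have hQ2 : Qd ((N - 1) :: (b - 1) :: s₂) := by
    have h := move1 [] s₂ N b
    simp only [List.nil_append] at h
    unfold Qd at hQ ⊢
    rw [← h]
    exact hQ
  rcases eq_or_lt_of_le hb with hb2|hb2
  · -- b = 1 : contradiction
    obtain ⟨cc, s₃, rfl⟩ : ∃ cc s₃, s₂ = cc :: s₃ := by
      cases h : s₂ with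
      | nil => rw [h] at h2; simp at h2
      | cons x xs => exact ⟨x, xs, rfl⟩
    have e1 : b - 1 = 0 := by omega
    have hQ3 : Qd ((N - 1) :: 0 :: cc :: s₃) := by rw [e1] at hQ2; exact hQ2
    have hQ4 : Qd (((N - 1) + cc) :: s₃) := by
      apply Qd_of_neg (l' := (N - 1) :: 0 :: cc :: s₃) _ hQ3
      have h := moveZ [] s₃ (N-1) cc
      simp only [List.nil_append] at h
      rw [h, neg_neg]
    have hcc : 1 ≤ cc := hpos cc (by simp)
    have hbnd := BL' (((N - 1) + cc) :: s₃)
      (by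
        intro x hx
        simp at hx
        rcases hx with rfl|hx
        · simp [hN]
          push_cast
          omega
        · exact hpos x (by simp [hx]))
      hQ4 ((N-1) + cc) (by simp)
    simp [hN] at hbnd h2 ⊢
    push_cast at hbnd
    omega
  · -- b ≥ 2
    have hIH := IH ((b-1) :: s₂) (by simp; omega) (by simp; omega)
      (by
        intro x hx
        simp at hx
        rcases hx with rfl|hx
        · omega
        · exact hpos x hx)
      (by
        have : ((((b-1) :: s₂).length : ℤ) - 1) = N - 1 := by simp [hN]
        rw [this]
        exact hQ2)
    have hlen2 : ((b-1) :: s₂).length - 2 = s₂.length - 1 := by simp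
    rw [hlen2] at hIH
    have hb3 : b - 1 = 1 ∧ s₂ = List.replicate (s₂.length - 1) (2:ℤ) ++ [1] := by
      constructor
      · exact (List.cons_eq_cons.mp hIH).1
      · exact (List.cons_eq_cons.mp hIH).2
    obtain ⟨hb4, hs2⟩ := hb3
    have hb5 : b = 2 := by omega
    subst hb5
    conv_lhs => rw [hs2]
    have : s₂.length = (s₂.length - 1) + 1 := by omega
    rw [this, List.replicate_succ]
    simp

lemma pal (t : ℕ) : ((1:ℤ) :: (List.replicate t (2:ℤ) ++ [1])).reverse
    = 1 :: (List.replicate t (2:ℤ) ++ [1]) := by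
  simp [List.reverse_cons, List.reverse_append, List.reverse_replicate]

lemma ML : ∀ (fuel : ℕ) (s : List ℤ), s.length ≤ fuel → 3 ≤ s.length →
    (∀ x ∈ s, (1:ℤ) ≤ x) → Qd (((s.length : ℤ) - 1) :: s) →
    s = 1 :: (List.replicate (s.length - 2) (2:ℤ) ++ [1]) := by
  intro fuel
  induction fuel with
  | zero => intro s h1 h2 _ _; omega
  | succ fuel IH =>
    intro s hlen h3 hpos hQ
    rcases eq_or_lt_of_le h3 with h3e|h4
    · -- length 3 : use C4
      obtain ⟨x, y, z, rfl⟩ := List.length_eq_three.mp h3e.symm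
      have hQ' : Qd [(2:ℤ), x, y, z] := by
        have : (([x, y, z].length : ℤ) - 1) = 2 := by norm_num
        rw [this] at hQ
        exact hQ
      rcases C4 (by norm_num) (hpos x (by simp)) (hpos y (by simp)) (hpos z (by simp)) hQ' with
        ⟨h1, _, _, _⟩|⟨_, h1, h2', h3'⟩
      · omega
      · subst h1; subst h2'; subst h3'
        simp [List.replicate]
    · -- length ≥ 4
      have hk4 : 4 ≤ s.length := h4
      set N : ℤ := (s.length : ℤ) - 1 with hN
      have hN3 : 3 ≤ N := by
        have : (4:ℤ) ≤ (s.length : ℤ) := by exact_mod_cast hk4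
        omega
      have hposl : ∀ x ∈ N :: s, (1:ℤ) ≤ x := by
        intro x hx
        simp at hx
        rcases hx with rfl|hx
        · omega
        · exact hpos x hx
      obtain ⟨u, v, huv⟩ := exists_one (N :: s) (by simp) hposl hQ
      obtain ⟨u', hu⟩ : ∃ u', u = N :: u' := by
        cases u with
        | nil =>
          exfalso
          have : N = 1 := by
            have := congrArg (fun l => l.headI) huv
            simpa using this
          omega
        | cons w u' =>
          refine ⟨u', ?_⟩
          have : w = N := by
            have := congrArg (fun l => l.headI) huv
            simpa using this.symm
          rw [this]
      subst hu
      have hs_split : s = u' ++ 1 :: v := by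
        have := congrArg List.tail huv
        simpa using this
      rcases List.eq_nil_or_concat u' with hu'|⟨p, a, hp⟩
      · -- head case : s = 1 :: v
        subst hu'
        simp only [List.nil_append] at hs_split
        obtain ⟨b, s₂, rfl⟩ : ∃ b s₂, v = b :: s₂ := by
          cases h : v with
          | nil => rw [hs_split, h] at hk4; simp at hk4
          | cons x xs => exact ⟨x, xs, rfl⟩
        have hlen2 : s.length = s₂.length + 2 := by rw [hs_split]; simp
        have hb1 : 1 ≤ b := hpos b (by rw [hs_split]; simp)
        have hpos2 : ∀ x ∈ s₂, (1:ℤ) ≤ x := fun x hx => hpos x (by rw [hs_split]; simp [hx])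
        have hres := headcase fuel IH b s₂ hb1 hpos2 (by omega) (by omega)
          (by
            have : ((s₂.length : ℤ) + 1) = N := by rw [hN, hlen2]; push_cast; ring
            rw [this, ← hs_split]
            exact hQ)
        rw [hlen2, hs_split, hres]
        simp
      · -- u' = p ++ [a]
        subst hp
        simp only [List.concat_eq_append] at huv hs_split
        rcases v with _|⟨b, q⟩
        · -- v = [] : tail case, use reversal
          have hsr : s.reverse = 1 :: (p ++ [a]).reverse := by
            rw [hs_split]
            simp
          have hQr : Qd (N :: s.reverse) := by
            rw [Q_rot1]
            have h1 := Qd_reverse hQ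
            rw [List.reverse_cons] at h1
            exact h1
          obtain ⟨b, s₂, hbs⟩ : ∃ b s₂, (p ++ [a]).reverse = b :: s₂ := ⟨a, p.reverse, by simp⟩
          have hlen2 : s.length = s₂.length + 2 := by
            have : s.reverse.length = s₂.length + 2 := by rw [hsr, hbs]; simp
            simpa using this
          have hposr : ∀ x ∈ s.reverse, (1:ℤ) ≤ x := fun x hx => hpos x (by simpa using hx)
          have hb1 : 1 ≤ b := hposr b (by rw [hsr, hbs]; simp)
          have hpos2 : ∀ x ∈ s₂, (1:ℤ) ≤ x := fun x hx => hposr x (by rw [hsr, hbs]; simp [hx])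
          have hres := headcase fuel IH b s₂ hb1 hpos2 (by omega) (by omega)
            (by
              have he : ((s₂.length : ℤ) + 1) = N := by rw [hN, hlen2]; push_cast; ring
              rw [he]
              have : N :: s.reverse = N :: 1 :: b :: s₂ := by rw [hsr, hbs]
              rw [← this]
              exact hQr)
          have hrev : s.reverse = 1 :: (List.replicate s₂.length (2:ℤ) ++ [1]) := by
            rw [hsr, hbs, hres]
          have hs_eq : s = 1 :: (List.replicate s₂.length (2:ℤ) ++ [1]) := by
            have h0 : s = (1 :: (List.replicate s₂.length (2:ℤ) ++ [1])).reverse := by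
              rw [← hrev]; simp
            rw [pal] at h0
            exact h0
          rw [hlen2]
          simpa using hs_eq
        · -- interior : contradiction
          exfalso
          refine interior_contra N a b p q ?_ ?_ hN3 ?_
          · intro x hx
            apply hposl
            rw [huv]
            simp at hx ⊢
            tauto
          · have : N :: (p ++ a :: 1 :: b :: q) = (N :: (p ++ [a])) ++ 1 :: b :: q := by simp
            rw [this, ← huv]
            exact hQ
          · have : s.length = p.length + q.length + 3 := by rw [hs_split]; simp; omega
            rw [hN, this]
            push_cast
            omega

lemma M_special (k : ℕ) : M (1 :: List.replicate k (2:ℤ)) = !![1, -((k:ℤ)+1); 1, -(k:ℤ)] := by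
  induction k with
  | zero =>
    rw [List.replicate_zero, M_single]
    ext i j
    fin_cases i <;> fin_cases j <;> simp [E]
  | succ k ih =>
    have h1 : (1:ℤ) :: List.replicate (k+1) (2:ℤ) = (1 :: List.replicate k (2:ℤ)) ++ [2] := by
      rw [List.replicate_succ']
      simp
    rw [h1, M_append, M_single, ih]
    ext i j
    fin_cases i <;> fin_cases j <;>
      simp [E, Matrix.mul_apply, Fin.sum_univ_two] <;> push_cast <;> ring

lemma M_final (n : ℕ) (hn : 1 ≤ n) :
    M (1 :: (List.replicate (n-1) (2:ℤ) ++ [1, (n:ℤ)])) = -1 := by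
  have h1 : (1:ℤ) :: (List.replicate (n-1) (2:ℤ) ++ [1, (n:ℤ)])
      = (1 :: List.replicate (n-1) (2:ℤ)) ++ [1, (n:ℤ)] := by simp
  rw [h1, M_append, M_special, M_cons2, M_nil, one_mul]
  have hc : ((n-1 : ℕ) : ℤ) = (n:ℤ) - 1 := by
    have : (1:ℕ) ≤ n := hn
    push_cast [Nat.cast_sub this]
    ring
  rw [hc]
  ext i j
  fin_cases i <;> fin_cases j <;>
    simp [E, Matrix.mul_apply, Fin.sum_univ_two, Matrix.one_apply] <;> ring

theorem stmt17 (n : ℕ) (hn : 3 ≤ n) (l : List ℤ) :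
    (l.length = n + 2 ∧ (∀ a ∈ l, 0 < a) ∧ (M l = 1 ∨ M l = -1) ∧
        l.getLast? = some (n : ℤ)) ↔
      l = 1 :: (List.replicate (n - 1) (2 : ℤ) ++ [1, (n : ℤ)]) := by
  constructor
  · rintro ⟨hlen, hpos, hQ, hlast⟩
    have hQ' : Qd l := hQ
    have hne : l ≠ [] := by intro h; rw [h] at hlen; simp at hlen
    obtain ⟨u, last, hul⟩ : ∃ u last, l = u ++ [last] := by
      rcases List.eq_nil_or_concat l with h|⟨u, last, h⟩
      · exact absurd h hne
      · exact ⟨u, last, by rw [h]; simp⟩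
    have hlastn : last = (n:ℤ) := by
      rw [hul, List.getLast?_concat] at hlast
      exact Option.some_injective _ hlast
    subst hlastn
    subst hul
    have hu_len : u.length = n + 1 := by
      simp at hlen
      omega
    have hQrot : Qd ((n:ℤ) :: u) := by
      rw [Q_rot1]
      exact hQ'
    have hposu : ∀ x ∈ u, (1:ℤ) ≤ x := by
      intro x hx
      have := hpos x (by simp [hx])
      omega
    have hres := ML (n+1) u (by omega) (by omega)
      hposu
      (by
        have : ((u.length : ℤ) - 1) = (n:ℤ) := by rw [hu_len]; push_cast; ring
        rw [this]
        exact hQrot)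
    rw [hu_len] at hres
    have : n + 1 - 2 = n - 1 := by omega
    rw [this] at hres
    rw [hres]
    simp
  · intro h
    subst h
    refine ⟨?_, ?_, ?_, ?_⟩
    · simp [List.length_replicate]
      omega
    · intro a ha
      simp at ha
      rcases ha with rfl|h|rfl|rfl
      · norm_num
      · rw [h.2]; norm_num
      · norm_num
      · positivity
    · right
      exact M_final n (by omega)
    · have : (1:ℤ) :: (List.replicate (n-1) (2:ℤ) ++ [1, (n:ℤ)])
          = ((1:ℤ) :: List.replicate (n-1) (2:ℤ) ++ [1]) ++ [(n:ℤ)] := by simp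
      rw [this, List.getLast?_concat]
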